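/- arXiv:0807.4350 — 2 statements merged into one kernel-verified Lean document; each statement's English description precedes it below -/
import Mathlib

section
/- With notation as above, the image under the orthogonal projection π_Θ of any connected component C of the set of Π-regular elements of V (a Weyl chamber) is contained in a single connected component of the set of Θ-regular elements of a(Θ): indeed, π_Θ(C) is a convex set consisting of Θ-regular elements of a(Θ). -/
open scoped RealInnerProductSpace

/-!
A continuous real function that does not vanish on `F` keeps the sign it has at `x` on the whole
connected component of `F` through `x` (intermediate value theorem). Applied to the roots, this
identifies a chamber with the intersection of the open half-spaces `{H | 0 < α x₀ * α H}`, which is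
convex, so its image under the linear map `π_Θ` is convex too. Since `π_Θ` is self-adjoint and
fixes the coroots `H_α` of `α ∈ Θ`, it satisfies `α (π_Θ H) = ⟪H_α, π_Θ H⟫ = ⟪H_α, H⟫ = α H`, so it
preserves `Θ`-regularity.
-/

theorem mul_pos_of_mem_connectedComponentIn {X : Type*} [TopologicalSpace X] {F : Set X}
    {f : X → ℝ} (hf : ContinuousOn f F) (hF : ∀ z ∈ F, f z ≠ 0) {x y : X}
    (hy : y ∈ connectedComponentIn F x) : 0 < f x * f y := by
  have hx : x ∈ connectedComponentIn F x :=
    mem_connectedComponentIn (connectedComponentIn_nonempty_iff.1 ⟨y, hy⟩)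
  have hsub := connectedComponentIn_subset F x
  have hIVT : Set.uIcc (f x) (f y) ⊆ f '' connectedComponentIn F x :=
    ((isPreconnected_connectedComponentIn.image f (hf.mono hsub)).ordConnected).uIcc_subset
      (Set.mem_image_of_mem f hx) (Set.mem_image_of_mem f hy)
  by_contra! hle
  obtain ⟨z, hz, hfz⟩ := hIVT (by
    rcases mul_nonpos_iff.1 hle with h | h
    exacts [Set.mem_uIcc_of_ge h.2 h.1, Set.mem_uIcc_of_le h.1 h.2])
  exact hF z (hsub hz) hfz

section Chamber

variable {V : Type*} [AddCommGroup V] [Module ℝ V]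

def regularSet (Φ : Finset (V →ₗ[ℝ] ℝ)) : Set V := {H | ∀ α ∈ Φ, α H ≠ 0}

def chamberOf (Φ : Finset (V →ₗ[ℝ] ℝ)) (x₀ : V) : Set V := ⋂ α ∈ Φ, {H | 0 < α x₀ * α H}

theorem convex_chamberOf (Φ : Finset (V →ₗ[ℝ] ℝ)) (x₀ : V) : Convex ℝ (chamberOf Φ x₀) :=
  convex_iInter₂ fun α _ => (convex_Ioi 0).linear_preimage (α x₀ • α)

theorem chamberOf_subset_regularSet (Φ : Finset (V →ₗ[ℝ] ℝ)) (x₀ : V) :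
    chamberOf Φ x₀ ⊆ regularSet Φ := fun _ hH α hα =>
  right_ne_zero_of_mul (Set.mem_iInter₂.1 hH α hα).ne'

theorem mem_chamberOf_self {Φ : Finset (V →ₗ[ℝ] ℝ)} {x₀ : V} (hx₀ : x₀ ∈ regularSet Φ) :
    x₀ ∈ chamberOf Φ x₀ :=
  Set.mem_iInter₂.2 fun α hα => mul_self_pos.2 (hx₀ α hα)

variable [TopologicalSpace V] [IsTopologicalAddGroup V] [ContinuousSMul ℝ V] [T2Space V]
  [FiniteDimensional ℝ V]

theorem connectedComponentIn_regularSet {Φ : Finset (V →ₗ[ℝ] ℝ)} {x₀ : V}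
    (hx₀ : x₀ ∈ regularSet Φ) : connectedComponentIn (regularSet Φ) x₀ = chamberOf Φ x₀ := by
  refine subset_antisymm (fun H hH => Set.mem_iInter₂.2 fun α hα => ?_) ?_
  · exact mul_pos_of_mem_connectedComponentIn α.continuous_of_finiteDimensional.continuousOn
      (fun z (hz : z ∈ regularSet Φ) => hz α hα) hH
  · exact (convex_chamberOf Φ x₀).isPreconnected.subset_connectedComponentIn
      (mem_chamberOf_self hx₀) (chamberOf_subset_regularSet Φ x₀)

theorem convex_connectedComponentIn_regularSet (Φ : Finset (V →ₗ[ℝ] ℝ)) (x₀ : V) :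
    Convex ℝ (connectedComponentIn (regularSet Φ) x₀) := by
  by_cases hx₀ : x₀ ∈ regularSet Φ
  · rw [connectedComponentIn_regularSet hx₀]
    exact convex_chamberOf Φ x₀
  · rw [connectedComponentIn_eq_empty hx₀]
    exact convex_empty

end Chamber

theorem inner_starProjection_eq_of_mem_left {E : Type*} [NormedAddCommGroup E]
    [InnerProductSpace ℝ E] (K : Submodule ℝ E) [K.HasOrthogonalProjection] {u : E} (hu : u ∈ K) (v : E) :
    ⟪u, K.starProjection v⟫ = ⟪u, v⟫ := by
  rw [← K.inner_starProjection_left_eq_right, K.starProjection_eq_self_iff.2 hu]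

theorem stmt2_general
    {V : Type*} [NormedAddCommGroup V] [InnerProductSpace ℝ V] [FiniteDimensional ℝ V]
    (Φ : Finset (V →ₗ[ℝ] ℝ))
    (coroot : (V →ₗ[ℝ] ℝ) → V)
    (hcoroot : ∀ α ∈ Φ, ∀ H : V, ⟪coroot α, H⟫ = α H)
    (Θ : Finset (V →ₗ[ℝ] ℝ)) (hΘ : Θ ⊆ Φ)
    (C : Set V) (x₀ : V)
    (hC : C = connectedComponentIn {H : V | ∀ α ∈ Φ, α H ≠ 0} x₀)
    (πΘ : V → V)
    (hπΘ : πΘ = fun H : V =>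
      ((Submodule.orthogonalProjection (Submodule.span ℝ (coroot '' (Θ : Set (V →ₗ[ℝ] ℝ)))) H : V))) :
    Convex ℝ (πΘ '' C) ∧ ∀ y ∈ πΘ '' C, ∀ α ∈ Θ, α y ≠ 0 := by
  set K := Submodule.span ℝ (coroot '' (Θ : Set (V →ₗ[ℝ] ℝ)))
  obtain rfl : πΘ = K.starProjection := hπΘ
  refine ⟨?_, ?_⟩
  · exact (hC ▸ convex_connectedComponentIn_regularSet Φ x₀).linear_image
      (K.starProjection : V →ₗ[ℝ] V)
  · rintro _ ⟨H, hH, rfl⟩ α hα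
    have hHreg : H ∈ regularSet Φ := connectedComponentIn_subset _ x₀ (hC ▸ hH)
    rw [← hcoroot α (hΘ hα), inner_starProjection_eq_of_mem_left K
      (Submodule.subset_span ⟨α, hα, rfl⟩), hcoroot α (hΘ hα)]
    exact hHreg α (hΘ hα)

/-- The image under `π_Θ` of a connected component `C` of the set of `Φ`-regular elements
(a Weyl chamber) is a convex set consisting of `Θ`-regular elements of `a(Θ)`; in particular
it is contained in a single connected component of the `Θ`-regular elements of `a(Θ)`. -/
theorem stmt2
    {V : Type*} [NormedAddCommGroup V] [InnerProductSpace ℝ V] [FiniteDimensional ℝ V]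
    (Φ : Finset (V →ₗ[ℝ] ℝ)) (hΦ : ∀ α ∈ Φ, α ≠ 0)
    (coroot : (V →ₗ[ℝ] ℝ) → V)
    (hcoroot : ∀ α ∈ Φ, ∀ H : V, ⟪coroot α, H⟫ = α H)
    (Θ : Finset (V →ₗ[ℝ] ℝ)) (hΘ : Θ ⊆ Φ)
    (C : Set V) (x₀ : V) (hx₀ : ∀ α ∈ Φ, α x₀ ≠ 0)
    (hC : C = connectedComponentIn {H : V | ∀ α ∈ Φ, α H ≠ 0} x₀)
    (πΘ : V → V)
    (hπΘ : πΘ = fun H : V =>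
      ((Submodule.orthogonalProjection (Submodule.span ℝ (coroot '' (Θ : Set (V →ₗ[ℝ] ℝ)))) H : V))) :
    Convex ℝ (πΘ '' C) ∧ ∀ y ∈ πΘ '' C, ∀ α ∈ Θ, α y ≠ 0 :=
  stmt2_general Φ coroot hcoroot Θ hΘ C x₀ hC πΘ hπΘ
end

section
/- Let Π be a root system in a finite-dimensional real inner product space V with a choice of positive roots Π^+ and simple roots Σ, and let Θ ⊆ Σ. Let a(Θ) = span{H_α : α ∈ Θ} and π_Θ the orthogonal projection onto a(Θ). Let w be an element of the Weyl group W and let a(Θ)^w be the chamber of the root subsystem generated by Θ in a(Θ) containing π_Θ(w·a^+), where a^+ is the fundamental chamber. Then every root α in the span of Θ that is positive on a(Θ)^w is positive on w·a^+; consequently, with n(Θ)^w = ⨁{g_α : α ∈ ⟨Θ⟩, α > 0 on a(Θ)^w} and n^+ = ⨁{g_α : α ∈ Π^+}, one has n(Θ)^w ⊆ w·n^+ in any Lie algebra g with root space decomposition for Π. -/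
/-!
A functional in the span of `Θ` is `⟪u, ·⟫` for some `u ∈ a(Θ)`, so it is unchanged by the
orthogonal projection `π_Θ`. Positivity on `a(Θ)^w ⊇ π_Θ(w · a⁺)` therefore transfers to
`w · a⁺`, i.e. `α ∘ w` is a positive root, and then `g_α = W (g_{α ∘ w}) ⊆ W n⁺`.
-/

open scoped RealInnerProductSpace

section CorootRepresentation

variable {V : Type*} [NormedAddCommGroup V] [InnerProductSpace ℝ V]

theorem span_eq_map_innerₗ_span_image {S : Set (V →ₗ[ℝ] ℝ)} {coroot : (V →ₗ[ℝ] ℝ) → V}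
    (hcoroot : ∀ α ∈ S, ∀ H : V, ⟪coroot α, H⟫ = α H) :
    Submodule.span ℝ S = (Submodule.span ℝ (coroot '' S)).map (innerₗ V) := by
  rw [← Submodule.span_image, Set.image_image,
    Set.image_congr fun α hα => LinearMap.ext (hcoroot α hα), Set.image_id']

theorem apply_orthogonalProjectionOnto_eq_of_mem_map_innerₗ (K : Submodule ℝ V)
    [K.HasOrthogonalProjection] {α : V →ₗ[ℝ] ℝ} (hα : α ∈ K.map (innerₗ V)) (H : V) :
    α (K.orthogonalProjectionOnto H) = α H := by
  obtain ⟨u, hu, rfl⟩ := hα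
  change ⟪u, K.starProjection H⟫ = ⟪u, H⟫
  rw [← K.inner_starProjection_left_eq_right, K.starProjection_eq_self_iff.mpr hu]

end CorootRepresentation

theorem biSup_le_map_biSup_of_comp_mem {R V L : Type*} [CommSemiring R]
    [AddCommMonoid V] [Module R V] [AddCommMonoid L] [Module R L]
    (g : Module.Dual R V → Submodule R L) (w : V ≃ₗ[R] V) (W : L ≃ₗ[R] L)
    (hW : ∀ α, (g α).map (W : L →ₗ[R] L) = g (α ∘ₗ (w.symm : V →ₗ[R] V)))
    {A P : Set (Module.Dual R V)} (hAP : ∀ α ∈ A, α ∘ₗ (w : V →ₗ[R] V) ∈ P) :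
    ⨆ α ∈ A, g α ≤ (⨆ β ∈ P, g β).map (W : L →ₗ[R] L) := by
  refine iSup₂_le fun α hα => ?_
  have hcomp : (α ∘ₗ (w : V →ₗ[R] V)) ∘ₗ (w.symm : V →ₗ[R] V) = α := by ext; simp
  rw [← hcomp, ← hW]
  exact Submodule.map_mono (le_iSup₂ (f := fun β (_ : β ∈ P) => g β) _ (hAP α hα))

theorem stmt8_general
    {V : Type*} [NormedAddCommGroup V] [InnerProductSpace ℝ V] [FiniteDimensional ℝ V]
    (Φ : Finset (V →ₗ[ℝ] ℝ))
    (coroot : (V →ₗ[ℝ] ℝ) → V)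
    (hcoroot : ∀ α ∈ Φ, ∀ H : V, ⟪coroot α, H⟫ = α H)
    (Φp Sg Θ : Finset (V →ₗ[ℝ] ℝ)) (hΦp : Φp ⊆ Φ) (hSg : Sg ⊆ Φp) (hΘ : Θ ⊆ Sg)
    -- the fundamental chamber `a⁺` and the characterization of positive roots
    (aplus : Set V)
    (hΦpos : ∀ α ∈ Φ, (α ∈ Φp ↔ ∀ x ∈ aplus, 0 < α x))
    -- the Weyl group element `w`, acting on roots by `α ↦ α ∘ w⁻¹`
    (w : V ≃ₗ[ℝ] V)
    (hstab : ∀ α ∈ Φ, α ∘ₗ (w : V →ₗ[ℝ] V) ∈ Φ)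
    -- the chamber `a(Θ)^w` of `⟨Θ⟩` in `a(Θ)` containing `π_Θ(w · a⁺)`
    (πΘ : V → V)
    (hπΘ : πΘ = fun H : V =>
      ((Submodule.orthogonalProjectionOnto (Submodule.span ℝ (coroot '' (Θ : Set (V →ₗ[ℝ] ℝ)))) H : V)))
    (Cw : Set V)
    (hcont : πΘ '' (w '' aplus) ⊆ Cw)
    -- a Lie algebra with root space decomposition for `Φ`, on which `w` acts by `W`
    {L : Type*} [LieRing L] [LieAlgebra ℝ L]
    (g : (V →ₗ[ℝ] ℝ) → Submodule ℝ L)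
    (W : L ≃ₗ[ℝ] L)
    (hW : ∀ α : V →ₗ[ℝ] ℝ,
      (g α).map (W : L →ₗ[ℝ] L) = g (α ∘ₗ (w.symm : V →ₗ[ℝ] V))) :
    (∀ α ∈ Φ, α ∈ Submodule.span ℝ (Θ : Set (V →ₗ[ℝ] ℝ)) →
      (∀ y ∈ Cw, 0 < α y) → ∀ x ∈ aplus, 0 < α (w x)) ∧
    (⨆ α ∈ {α : V →ₗ[ℝ] ℝ | α ∈ Φ ∧ α ∈ Submodule.span ℝ (Θ : Set (V →ₗ[ℝ] ℝ)) ∧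
        ∀ y ∈ Cw, 0 < α y}, g α)
      ≤ (⨆ α ∈ Φp, g α).map (W : L →ₗ[ℝ] L) := by
  have hspanΘ := span_eq_map_innerₗ_span_image (coroot := coroot) (S := (Θ : Set (V →ₗ[ℝ] ℝ)))
    fun α hα => hcoroot α (hΦp (hSg (hΘ hα)))
  have hproj : ∀ α ∈ Submodule.span ℝ (Θ : Set (V →ₗ[ℝ] ℝ)), ∀ H, α (πΘ H) = α H :=
    fun α hα H => hπΘ ▸ apply_orthogonalProjectionOnto_eq_of_mem_map_innerₗ _ (hspanΘ ▸ hα) H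
  have hpos_w : ∀ α ∈ Φ, α ∈ Submodule.span ℝ (Θ : Set (V →ₗ[ℝ] ℝ)) →
      (∀ y ∈ Cw, 0 < α y) → ∀ x ∈ aplus, 0 < α (w x) :=
    fun α _ hα hpos x hx => hproj α hα (w x) ▸ hpos _ (hcont ⟨w x, ⟨x, hx, rfl⟩, rfl⟩)
  exact ⟨hpos_w, biSup_le_map_biSup_of_comp_mem g w W hW
    fun α ⟨hαΦ, hα, hpos⟩ => (hΦpos _ (hstab α hαΦ)).2 (hpos_w α hαΦ hα hpos)⟩

/-- Let `Φ` be a root system with positive system `Φ⁺` (with chamber `a⁺`), simple roots `Sg`,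
`Θ ⊆ Sg`, and let `a(Θ)^w` be the chamber of the root subsystem `⟨Θ⟩` in `a(Θ)` containing
`π_Θ(w · a⁺)`.  Then every root in the span of `Θ` which is positive on `a(Θ)^w` is positive
on `w · a⁺`; consequently, in a Lie algebra with a compatible root space decomposition,
`n(Θ)^w ⊆ w · n⁺`. -/
theorem stmt8
    {V : Type*} [NormedAddCommGroup V] [InnerProductSpace ℝ V] [FiniteDimensional ℝ V]
    (Φ : Finset (V →ₗ[ℝ] ℝ)) (hΦ0 : ∀ α ∈ Φ, α ≠ 0)
    (coroot : (V →ₗ[ℝ] ℝ) → V)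
    (hcoroot : ∀ α ∈ Φ, ∀ H : V, ⟪coroot α, H⟫ = α H)
    (Φp Sg Θ : Finset (V →ₗ[ℝ] ℝ)) (hΦp : Φp ⊆ Φ) (hSg : Sg ⊆ Φp) (hΘ : Θ ⊆ Sg)
    (hpm : ∀ α ∈ Φ, α ∈ Φp ∨ -α ∈ Φp)
    -- the fundamental chamber `a⁺` and the characterization of positive roots
    (aplus : Set V) (haplus : aplus = {x : V | ∀ α ∈ Φp, 0 < α x})
    (x₀ : V) (hx₀ : x₀ ∈ aplus)
    (hΦpos : ∀ α ∈ Φ, (α ∈ Φp ↔ ∀ x ∈ aplus, 0 < α x))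
    -- the Weyl group element `w`, acting on roots by `α ↦ α ∘ w⁻¹`
    (w : V ≃ₗ[ℝ] V)
    (hstab : ∀ α ∈ Φ, α ∘ₗ (w : V →ₗ[ℝ] V) ∈ Φ)
    (hstab' : ∀ α ∈ Φ, α ∘ₗ (w.symm : V →ₗ[ℝ] V) ∈ Φ)
    -- the chamber `a(Θ)^w` of `⟨Θ⟩` in `a(Θ)` containing `π_Θ(w · a⁺)`
    (πΘ : V → V)
    (hπΘ : πΘ = fun H : V =>
      ((Submodule.orthogonalProjectionOnto (Submodule.span ℝ (coroot '' (Θ : Set (V →ₗ[ℝ] ℝ)))) H : V)))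
    (Cw : Set V) (y₀ : V)
    (hCw : Cw = connectedComponentIn
      {y : V | y ∈ Submodule.span ℝ (coroot '' (Θ : Set (V →ₗ[ℝ] ℝ))) ∧
        ∀ α ∈ Φ, (α ∈ Submodule.span ℝ (Θ : Set (V →ₗ[ℝ] ℝ)) → α y ≠ 0)} y₀)
    (hcont : πΘ '' (w '' aplus) ⊆ Cw)
    -- a Lie algebra with root space decomposition for `Φ`, on which `w` acts by `W`
    {L : Type*} [LieRing L] [LieAlgebra ℝ L]
    (g : (V →ₗ[ℝ] ℝ) → Submodule ℝ L)
    (hsupp : ∀ α, α ∉ Φ → g α = ⊥)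
    (W : L ≃ₗ[ℝ] L)
    (hW : ∀ α : V →ₗ[ℝ] ℝ,
      (g α).map (W : L →ₗ[ℝ] L) = g (α ∘ₗ (w.symm : V →ₗ[ℝ] V))) :
    (∀ α ∈ Φ, α ∈ Submodule.span ℝ (Θ : Set (V →ₗ[ℝ] ℝ)) →
      (∀ y ∈ Cw, 0 < α y) → ∀ x ∈ aplus, 0 < α (w x)) ∧
    (⨆ α ∈ {α : V →ₗ[ℝ] ℝ | α ∈ Φ ∧ α ∈ Submodule.span ℝ (Θ : Set (V →ₗ[ℝ] ℝ)) ∧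
        ∀ y ∈ Cw, 0 < α y}, g α)
      ≤ (⨆ α ∈ Φp, g α).map (W : L →ₗ[ℝ] L) :=
  stmt8_general Φ coroot hcoroot Φp Sg Θ hΦp hSg hΘ aplus hΦpos w hstab πΘ hπΘ Cw hcont g W hW
end
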